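/- arXiv:1111.3183 — 4 statements merged into one kernel-verified Lean document; each statement's English description precedes it below -/
import Mathlib

section
/- For any three unit vectors u, v, w ∈ ℂ², one has arccos‖⟨u, v⟩‖ + arccos‖⟨v, w⟩‖ + arccos‖⟨u, w⟩‖ ≤ π. (Equivalently: the pairwise distances between the images of any three points of S³ in the quotient S³/S¹ of the Hopf circle action, which is the round sphere S²(1/2) of radius 1/2 with distance arccos of the modulus of the complex inner product, sum to at most π; in particular the 3-extent of S²(1/2) is at most π/3.) -/
/-!
Let `u' = u - ⟪v, u⟫ v` and `w' = w - ⟪v, w⟫ v` be the components of `u` and `w` orthogonal to the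
unit vector `v`. In a two-dimensional space they are parallel, so Cauchy–Schwarz is an equality
for them:
`√(1 - ‖⟪u, v⟫‖²) √(1 - ‖⟪v, w⟫‖²) = ‖u'‖ ‖w'‖ = ‖⟪u', w'⟫‖ = ‖⟪u, w⟫ - ⟪u, v⟫ ⟪v, w⟫‖
  ≤ ‖⟪u, w⟫‖ + ‖⟪u, v⟫‖ ‖⟪v, w⟫‖`.
With `α = arccos ‖⟪u, v⟫‖` and `β = arccos ‖⟪v, w⟫‖`, both in `[0, π/2]`, this reads
`cos (α + β) ≥ -‖⟪u, w⟫‖`, that is `α + β ≤ π - arccos ‖⟪u, w⟫‖`.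
-/

open Module Real

theorem arccos_add_arccos_add_arccos_le_pi {a b c : ℝ} (ha₀ : 0 ≤ a) (ha₁ : a ≤ 1) (hb₀ : 0 ≤ b)
    (hb₁ : b ≤ 1) (h : √(1 - a ^ 2) * √(1 - b ^ 2) ≤ c + a * b) :
    arccos a + arccos b + arccos c ≤ π := by
  have hα := arccos_le_pi_div_two.2 ha₀
  have hβ := arccos_le_pi_div_two.2 hb₀
  have hcos : -c ≤ cos (arccos a + arccos b) := by
    rw [cos_add, cos_arccos (by linarith) ha₁, cos_arccos (by linarith) hb₁, sin_arccos,
      sin_arccos]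
    linarith
  calc arccos a + arccos b + arccos c
      = arccos (cos (arccos a + arccos b)) + arccos c := by
        rw [arccos_cos (add_nonneg (arccos_nonneg a) (arccos_nonneg b)) (by linarith)]
    _ ≤ arccos (-c) + arccos c := by grw [arccos_le_arccos hcos]
    _ = π := by rw [arccos_neg]; ring

section TwoDimensional

variable {𝕜 E : Type*} [RCLike 𝕜] [NormedAddCommGroup E] [InnerProductSpace 𝕜 E]

local notation "⟪" x ", " y "⟫" => inner 𝕜 x y

theorem norm_inner_eq_norm_mul_norm_of_inner_eq_zero_of_inner_eq_zero [Fact (finrank 𝕜 E = 2)]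
    {x y v : E} (hv : v ≠ 0) (hxv : ⟪v, x⟫ = 0) (hyv : ⟪v, y⟫ = 0) : ‖⟪x, y⟫‖ = ‖x‖ * ‖y‖ := by
  rcases eq_or_ne x 0 with rfl | hx
  · simp
  exact ((norm_inner_eq_norm_tfae 𝕜 x y).out 0 3).2
    (Or.inr (Submodule.mem_span_singleton_of_inner_eq_zero_of_inner_eq_zero hv hx hyv hxv))

variable {v : E}

theorem inner_sub_inner_smul_self (hv : ‖v‖ = 1) (x : E) : ⟪v, x - ⟪v, x⟫ • v⟫ = 0 := by
  rw [inner_sub_right, inner_smul_right, inner_self_eq_one_of_norm_eq_one hv, mul_one, sub_self]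

theorem inner_sub_inner_smul_sub_inner_smul (hv : ‖v‖ = 1) (x y : E) :
    ⟪x - ⟪v, x⟫ • v, y - ⟪v, y⟫ • v⟫ = ⟪x, y⟫ - ⟪x, v⟫ * ⟪v, y⟫ := by
  simp only [inner_sub_left, inner_sub_right, inner_smul_left, inner_smul_right,
    inner_self_eq_one_of_norm_eq_one hv, inner_conj_symm]
  ring

theorem norm_sub_inner_smul_sq (hv : ‖v‖ = 1) (x : E) :
    ‖x - ⟪v, x⟫ • v‖ ^ 2 = ‖x‖ ^ 2 - ‖⟪v, x⟫‖ ^ 2 := by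
  have h := inner_sub_inner_smul_sub_inner_smul (𝕜 := 𝕜) hv x x
  have hmul : ⟪x, v⟫ * ⟪v, x⟫ = (‖⟪v, x⟫‖ : 𝕜) ^ 2 := by
    rw [← inner_conj_symm x v, RCLike.conj_mul]
  rw [inner_self_eq_norm_sq_to_K, inner_self_eq_norm_sq_to_K, hmul] at h
  exact_mod_cast h

theorem norm_inner_sub_inner_mul_inner [Fact (finrank 𝕜 E = 2)] (hv : ‖v‖ = 1) (x y : E) :
    ‖⟪x, y⟫ - ⟪x, v⟫ * ⟪v, y⟫‖ = ‖x - ⟪v, x⟫ • v‖ * ‖y - ⟪v, y⟫ • v‖ := by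
  rw [← inner_sub_inner_smul_sub_inner_smul hv]
  exact norm_inner_eq_norm_mul_norm_of_inner_eq_zero_of_inner_eq_zero
    (ne_zero_of_norm_ne_zero (hv ▸ one_ne_zero)) (inner_sub_inner_smul_self hv x)
    (inner_sub_inner_smul_self hv y)

theorem sqrt_one_sub_norm_inner_sq_mul_le [Fact (finrank 𝕜 E = 2)] {u w : E} (hu : ‖u‖ = 1)
    (hv : ‖v‖ = 1) (hw : ‖w‖ = 1) :
    √(1 - ‖⟪u, v⟫‖ ^ 2) * √(1 - ‖⟪v, w⟫‖ ^ 2) ≤ ‖⟪u, w⟫‖ + ‖⟪u, v⟫‖ * ‖⟪v, w⟫‖ :=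
  calc √(1 - ‖⟪u, v⟫‖ ^ 2) * √(1 - ‖⟪v, w⟫‖ ^ 2)
      = ‖u - ⟪v, u⟫ • v‖ * ‖w - ⟪v, w⟫ • v‖ := by
        rw [← sqrt_sq (norm_nonneg (u - ⟪v, u⟫ • v)), ← sqrt_sq (norm_nonneg (w - ⟪v, w⟫ • v)),
          norm_sub_inner_smul_sq hv, norm_sub_inner_smul_sq hv, hu, hw, one_pow, norm_inner_symm]
    _ = ‖⟪u, w⟫ - ⟪u, v⟫ * ⟪v, w⟫‖ := (norm_inner_sub_inner_mul_inner hv u w).symm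
    _ ≤ ‖⟪u, w⟫‖ + ‖⟪u, v⟫‖ * ‖⟪v, w⟫‖ := by grw [norm_sub_le, norm_mul]

theorem arccos_norm_inner_add_arccos_norm_inner_add_arccos_norm_inner_le_pi
    [Fact (finrank 𝕜 E = 2)] {u w : E} (hu : ‖u‖ = 1) (hv : ‖v‖ = 1) (hw : ‖w‖ = 1) :
    arccos ‖⟪u, v⟫‖ + arccos ‖⟪v, w⟫‖ + arccos ‖⟪u, w⟫‖ ≤ π := by
  have norm_inner_le_one {x y : E} (hx : ‖x‖ = 1) (hy : ‖y‖ = 1) : ‖⟪x, y⟫‖ ≤ 1 := by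
    simpa [hx, hy] using norm_inner_le_norm (𝕜 := 𝕜) x y
  exact arccos_add_arccos_add_arccos_le_pi (norm_nonneg _) (norm_inner_le_one hu hv)
    (norm_nonneg _) (norm_inner_le_one hv hw) (sqrt_one_sub_norm_inner_sq_mul_le hu hv hw)

end TwoDimensional

/-- For any three unit vectors `u, v, w ∈ ℂ²`,
`arccos ‖⟪u, v⟫‖ + arccos ‖⟪v, w⟫‖ + arccos ‖⟪u, w⟫‖ ≤ π`.  Equivalently, the pairwise distances
between the images of any three points of `S³` in the quotient `S³/S¹` of the Hopf action (the
round sphere `S²(1/2)`, with distance `arccos` of the modulus of the complex inner product) sum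
to at most `π`; in particular the 3-extent of `S²(1/2)` is at most `π/3`. -/
theorem sum_arccos_abs_inner_le_pi
    (u v w : EuclideanSpace ℂ (Fin 2)) (hu : ‖u‖ = 1) (hv : ‖v‖ = 1) (hw : ‖w‖ = 1) :
    Real.arccos ‖(inner ℂ u v : ℂ)‖ + Real.arccos ‖(inner ℂ v w : ℂ)‖ +
      Real.arccos ‖(inner ℂ u w : ℂ)‖ ≤ Real.pi := by
  have : Fact (finrank ℂ (EuclideanSpace ℂ (Fin 2)) = 2) := ⟨finrank_euclideanSpace_fin⟩
  exact arccos_norm_inner_add_arccos_norm_inner_add_arccos_norm_inner_le_pi hu hv hw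
end

section
/- Consider sums of pairwise angles of triples of unit vectors in ℝ³: the set of real numbers of the form arccos⟨x, y⟩ + arccos⟨y, z⟩ + arccos⟨x, z⟩, where x, y, z range over unit vectors of the Euclidean space ℝ³, has greatest element 2π. In particular, for any three unit vectors in ℝ³ the sum of the three pairwise angles is at most 2π, and the value 2π is attained. (Equivalently: any three points on the round sphere S²(1/2) of radius 1/2 have pairwise geodesic distances summing to at most π, and π is attained; i.e. the 3-extent of S²(1/2) equals π/3.) -/
/-!
Reflecting the middle vector turns each of its two angles `θ` into `π - θ`, so the triangle
inequality for angles on the sphere, applied to `x, -y, z`, gives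
`∠(x, z) ≤ (π - ∠(x, y)) + (π - ∠(y, z))`. Equality holds for `x = z = -y`.
-/

open Real InnerProductGeometry

variable {V : Type*} [NormedAddCommGroup V] [InnerProductSpace ℝ V]

lemma InnerProductGeometry.angle_eq_arccos_inner_of_norm_eq_one {x y : V} (hx : ‖x‖ = 1)
    (hy : ‖y‖ = 1) : angle x y = arccos (inner ℝ x y) := by
  simp [angle, hx, hy]

lemma InnerProductGeometry.angle_add_angle_add_angle_le_two_pi (x y z : V) :
    angle x y + angle y z + angle x z ≤ 2 * π := by
  have h := angle_le_angle_add_angle x (-y) z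
  rw [angle_neg_right, angle_neg_left] at h
  linarith

lemma InnerProductGeometry.angle_add_angle_add_angle_neg_self {x : V} (hx : x ≠ 0) :
    angle x (-x) + angle (-x) x + angle x x = 2 * π := by
  rw [angle_self_neg_of_nonzero hx, angle_comm, angle_self_neg_of_nonzero hx, angle_self hx]
  ring

/-- The set of sums of pairwise angles of triples of unit vectors in `ℝ³`,
i.e. real numbers of the form `arccos ⟪x, y⟫ + arccos ⟪y, z⟫ + arccos ⟪x, z⟫` with `x, y, z` unit
vectors of `ℝ³`, has greatest element `2π`.  In particular any three unit vectors in `ℝ³` have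
pairwise angles summing to at most `2π`, and `2π` is attained.  (Equivalently: any three points of
the round sphere `S²(1/2)` have pairwise geodesic distances summing to at most `π`, and `π` is
attained; the 3-extent of `S²(1/2)` equals `π/3`.) -/
theorem isGreatest_sum_angles_unit_vectors :
    IsGreatest {s : ℝ | ∃ x y z : EuclideanSpace ℝ (Fin 3), ‖x‖ = 1 ∧ ‖y‖ = 1 ∧ ‖z‖ = 1 ∧
        s = Real.arccos (inner ℝ x y : ℝ) + Real.arccos (inner ℝ y z : ℝ) +
          Real.arccos (inner ℝ x z : ℝ)}
      (2 * Real.pi) := by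
  constructor
  · set e : EuclideanSpace ℝ (Fin 3) := EuclideanSpace.single 0 1
    have he : ‖e‖ = 1 := by simp [e]
    have hne : ‖-e‖ = 1 := by rw [norm_neg, he]
    refine ⟨e, -e, e, he, hne, he, ?_⟩
    rw [← angle_eq_arccos_inner_of_norm_eq_one he hne,
      ← angle_eq_arccos_inner_of_norm_eq_one hne he, ← angle_eq_arccos_inner_of_norm_eq_one he he,
      angle_add_angle_add_angle_neg_self (norm_ne_zero_iff.mp (he.trans_ne one_ne_zero))]
  · rintro s ⟨x, y, z, hx, hy, hz, rfl⟩
    rw [← angle_eq_arccos_inner_of_norm_eq_one hx hy,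
      ← angle_eq_arccos_inner_of_norm_eq_one hy hz, ← angle_eq_arccos_inner_of_norm_eq_one hx hz]
    exact angle_add_angle_add_angle_le_two_pi x y z
end

section
/- Rigidity of the extent bound on the sphere: if x, y, z are unit vectors in ℝ³ with arccos⟨x, y⟩ + arccos⟨y, z⟩ + arccos⟨x, z⟩ = 2π, then x, y, z are linearly dependent, i.e. they lie on a common great circle of the unit sphere S². -/
/-!
The Gram determinant of unit vectors with pairwise inner products `a, b, c` is
`1 - a² - b² - c² + 2abc`. If the three angles sum to `2π`, the third cosine is the cosine of the
sum of the other two, and this expression then vanishes identically; a singular Gram matrix means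
linear dependence.
-/

open Real Matrix

theorem Real.one_sub_cos_sq_sub_cos_sq_sub_cos_sq_add_two_mul_cos_mul_cos_mul_cos_eq_zero
    {α β γ : ℝ} (h : α + β + γ = 2 * π) :
    1 - cos α ^ 2 - cos β ^ 2 - cos γ ^ 2 + 2 * cos α * cos β * cos γ = 0 := by
  have hβ : cos β = cos α * cos γ - sin α * sin γ := by
    rw [show β = 2 * π - (α + γ) by linarith, cos_two_pi_sub, cos_add]
  rw [hβ]
  linear_combination -(1 - cos γ ^ 2) * sin_sq_add_cos_sq α - sin α ^ 2 * sin_sq_add_cos_sq γ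

theorem det_gram_of_norm_eq_one {E : Type*} [NormedAddCommGroup E] [InnerProductSpace ℝ E]
    {x y z : E} (hx : ‖x‖ = 1) (hy : ‖y‖ = 1) (hz : ‖z‖ = 1) :
    (gram ℝ ![x, y, z]).det = 1 - inner ℝ x y ^ 2 - inner ℝ y z ^ 2 - inner ℝ x z ^ 2
      + 2 * inner ℝ x y * inner ℝ y z * inner ℝ x z := by
  simp only [det_fin_three, gram_apply, Matrix.cons_val_zero, Matrix.cons_val_one,
    Matrix.cons_val_two, Matrix.head_cons, Matrix.tail_cons, real_inner_self_eq_norm_sq, hx, hy,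
    hz, real_inner_comm x y, real_inner_comm x z, real_inner_comm y z]
  ring

theorem Real.cos_arccos_inner_of_norm_eq_one {E : Type*} [NormedAddCommGroup E]
    [InnerProductSpace ℝ E] {x y : E} (hx : ‖x‖ = 1) (hy : ‖y‖ = 1) :
    cos (arccos (inner ℝ x y)) = inner ℝ x y :=
  cos_arccos (neg_one_le_real_inner_of_norm_eq_one hx hy) (real_inner_le_one_of_norm_eq_one hx hy)

/-- rigidity of the extent bound on the sphere.  If `x, y, z` are unit vectors
in `ℝ³` whose pairwise angles sum to `2π`, i.e.
`arccos ⟪x, y⟫ + arccos ⟪y, z⟫ + arccos ⟪x, z⟫ = 2π`, then `x, y, z` are linearly dependent;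
equivalently, they lie on a common great circle of the unit sphere `S²`. -/
theorem linearDependent_of_sum_angles_eq_two_pi
    (x y z : EuclideanSpace ℝ (Fin 3)) (hx : ‖x‖ = 1) (hy : ‖y‖ = 1) (hz : ‖z‖ = 1)
    (hsum : Real.arccos (inner ℝ x y : ℝ) + Real.arccos (inner ℝ y z : ℝ) +
      Real.arccos (inner ℝ x z : ℝ) = 2 * Real.pi) :
    ¬ LinearIndependent ℝ ![x, y, z] := by
  rw [← det_gram_ne_zero_iff_linearIndependent, det_gram_of_norm_eq_one hx hy hz, not_not]
  have hcos := one_sub_cos_sq_sub_cos_sq_sub_cos_sq_add_two_mul_cos_mul_cos_mul_cos_eq_zero hsum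
  rwa [cos_arccos_inner_of_norm_eq_one hx hy, cos_arccos_inner_of_norm_eq_one hy hz,
    cos_arccos_inner_of_norm_eq_one hx hz] at hcos
end

section
/- Let p, q, r be integers and let the 2-torus T² = Circle × Circle act on ℂ³ by ((s,t), (z₁,z₂,z₃)) ↦ (s·t^p·z₁, s·t^q·z₂, s·t^r·z₃), an action preserving the unit sphere S⁵ ⊂ ℂ³. If p ≠ q, then for any point z = (z₁, z₂, 0) ∈ S⁵ with z₁ ≠ 0 and z₂ ≠ 0, the isotropy subgroup of z equals {(s,t) ∈ T² : s·t^p = 1 and s·t^q = 1} and is a finite cyclic group isomorphic to ℤ/|p − q|. -/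
/-!
Since `z₁, z₂ ≠ 0`, a pair `(s, t)` fixes `z` iff `s * t ^ p = s * t ^ q = 1`, i.e. iff
`t ^ (p - q) = 1` and `s = t ^ (-p)`. Hence `t ↦ (t ^ (-p), t)` maps the `|p - q|`-th roots of
unity of the circle isomorphically onto the isotropy group, and these form a copy of `ℤ/|p - q|`.
-/

lemma Circle.coe_mul_eq_self_iff {u : Circle} {z : ℂ} (hz : z ≠ 0) : (u : ℂ) * z = z ↔ u = 1 :=
  (mul_eq_right₀ hz).trans Circle.coe_eq_one

noncomputable def ZMod.rootsOfUnityCircleMulEquiv (n : ℕ) [NeZero n] :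
    Multiplicative (ZMod n) ≃* rootsOfUnity n Circle :=
  MulEquiv.ofBijective (ZMod.rootsOfUnityAddChar n).toMonoidHom (bijective_rootsOfUnityAddChar n)

section CommGroup

variable {G : Type*} [CommGroup G]

def zpowGraph (p : ℤ) : G →* G × G := (zpowGroupHom (-p)).prod (MonoidHom.id G)

lemma zpowGraph_injective (p : ℤ) : Function.Injective (zpowGraph p : G →* G × G) :=
  fun _ _ h => congrArg Prod.snd h

lemma mul_zpow_eq_one_and_mul_zpow_eq_one_iff {p q : ℤ} {s t : G} :
    s * t ^ p = 1 ∧ s * t ^ q = 1 ↔ t ^ (p - q) = 1 ∧ t ^ (-p) = s := by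
  rw [mul_eq_one_iff_eq_inv, mul_eq_one_iff_eq_inv, zpow_neg, eq_comm (b := s)]
  constructor
  · rintro ⟨rfl, h⟩
    refine ⟨?_, rfl⟩
    rw [zpow_sub, inv_inj.mp h, mul_inv_cancel]
  · rintro ⟨h, rfl⟩
    refine ⟨rfl, ?_⟩
    rw [zpow_sub, mul_inv_eq_one] at h
    rw [h]

lemma coe_map_rootsOfUnity_zpowGraph (p q : ℤ) :
    (((rootsOfUnity (p - q).natAbs G).map ((zpowGraph p).comp (Units.coeHom G)) :
        Subgroup (G × G)) : Set (G × G)) = {g | g.1 * g.2 ^ p = 1 ∧ g.1 * g.2 ^ q = 1} := by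
  ext ⟨s, t⟩
  simp only [Subgroup.coe_map, Set.mem_image, SetLike.mem_coe, mem_rootsOfUnity, Set.mem_ofPred_eq,
    mul_zpow_eq_one_and_mul_zpow_eq_one_iff]
  constructor
  · rintro ⟨u, hu, hut⟩
    simp only [MonoidHom.comp_apply, Units.coeHom_apply, zpowGraph, MonoidHom.prod_apply,
      zpowGroupHom_apply, MonoidHom.id_apply, Prod.mk.injEq] at hut
    obtain ⟨rfl, rfl⟩ := hut
    exact ⟨by rw [← pow_natAbs_eq_one, ← Units.val_pow_eq_pow_val, hu, Units.val_one], rfl⟩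
  · rintro ⟨ht, rfl⟩
    exact ⟨toUnits t, by ext; simpa using ht, rfl⟩

end CommGroup

theorem isotropy_of_weighted_torus_action_general
    (p q r : ℤ) (hpq : p ≠ q) (z₁ z₂ : ℂ) (hz₁ : z₁ ≠ 0) (hz₂ : z₂ ≠ 0) :
    {g : Circle × Circle |
        ((g.1 * g.2 ^ p : Circle) : ℂ) * z₁ = z₁ ∧
        ((g.1 * g.2 ^ q : Circle) : ℂ) * z₂ = z₂ ∧
        ((g.1 * g.2 ^ r : Circle) : ℂ) * (0 : ℂ) = 0}
      = {g : Circle × Circle | g.1 * g.2 ^ p = 1 ∧ g.1 * g.2 ^ q = 1} ∧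
    ∃ K : Subgroup (Circle × Circle),
      (K : Set (Circle × Circle)) = {g : Circle × Circle | g.1 * g.2 ^ p = 1 ∧ g.1 * g.2 ^ q = 1} ∧
      Nonempty (K ≃* Multiplicative (ZMod (p - q).natAbs)) := by
  refine ⟨?_, ?_⟩
  · ext g
    simp only [Set.mem_ofPred_eq, Circle.coe_mul_eq_self_iff hz₁, Circle.coe_mul_eq_self_iff hz₂,
      mul_zero, and_true]
  · have : NeZero (p - q).natAbs := ⟨Int.natAbs_ne_zero.mpr (sub_ne_zero.mpr hpq)⟩
    have hinj := (zpowGraph_injective (G := Circle) p).comp Units.val_injective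
    exact ⟨_, coe_map_rootsOfUnity_zpowGraph p q,
      ⟨(Subgroup.equivMapOfInjective _ _ hinj).symm.trans
        (ZMod.rootsOfUnityCircleMulEquiv _).symm⟩⟩

/-- Let `p, q, r` be integers and let the 2-torus `T² = Circle × Circle` act on
`ℂ³` by `((s,t), (z₁,z₂,z₃)) ↦ (s·t^p·z₁, s·t^q·z₂, s·t^r·z₃)`, an action preserving the unit
sphere `S⁵ ⊂ ℂ³`.  If `p ≠ q`, then for any point `z = (z₁, z₂, 0) ∈ S⁵` with `z₁ ≠ 0` and
`z₂ ≠ 0`, the isotropy subgroup of `z` equals `{(s,t) : s·t^p = 1 ∧ s·t^q = 1}` and is a finite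
cyclic group isomorphic to `ℤ/|p − q|`. -/
theorem isotropy_of_weighted_torus_action
    (p q r : ℤ) (hpq : p ≠ q) (z₁ z₂ : ℂ) (hz₁ : z₁ ≠ 0) (hz₂ : z₂ ≠ 0)
    (hsphere : ‖z₁‖ ^ 2 + ‖z₂‖ ^ 2 + ‖(0 : ℂ)‖ ^ 2 = 1) :
    {g : Circle × Circle |
        ((g.1 * g.2 ^ p : Circle) : ℂ) * z₁ = z₁ ∧
        ((g.1 * g.2 ^ q : Circle) : ℂ) * z₂ = z₂ ∧
        ((g.1 * g.2 ^ r : Circle) : ℂ) * (0 : ℂ) = 0}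
      = {g : Circle × Circle | g.1 * g.2 ^ p = 1 ∧ g.1 * g.2 ^ q = 1} ∧
    ∃ K : Subgroup (Circle × Circle),
      (K : Set (Circle × Circle)) = {g : Circle × Circle | g.1 * g.2 ^ p = 1 ∧ g.1 * g.2 ^ q = 1} ∧
      Nonempty (K ≃* Multiplicative (ZMod (p - q).natAbs)) :=
  isotropy_of_weighted_torus_action_general p q r hpq z₁ z₂ hz₁ hz₂
end
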